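/- Let n ≥ 1, let f : [0,1) → ℝ be defined by f(0) = 1/2 and f(x) = (1 − √(1 − x²))/x² for 0 < x < 1, and let u, v ∈ ℝ^{n+1} satisfy ‖u‖² + ‖v‖² = 2, ⟨u, v⟩ = 0, and ‖u‖ < ‖v‖. Then ‖u‖·‖v‖ < 1, √(f(‖u‖·‖v‖))·‖v‖ = 1, and setting p = ‖v‖·u and q = v/‖v‖, one has ‖p‖ < 1, ‖q‖ = 1, ⟨p,q⟩ = 0, and √(f(‖p‖))·p_j + i·q_j/√(f(‖p‖)) = u_j + i·v_j for every j. -/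

import Mathlib

/-!
With `a = ‖u‖` and `b = ‖v‖`, the constraint `a² + b² = 2` gives
`1 - (ab)² = (b² - 1)²` with `b² > 1`, so `√(1 - (ab)²) = b² - 1` and
`f(ab) = (2 - b²)/(ab)² = 1/b²`; at `a = 0` this is `f(0) = 1/2` since then `b² = 2`.
Hence `√(f(‖p‖)) = 1/‖v‖`, which exactly undoes the rescalings `p = ‖v‖ u`, `q = v/‖v‖`.
-/

open scoped RealInnerProductSpace

/-- The auxiliary function `f` of Section 3.1: `f(0) = 1/2` and
`f(x) = (1 − √(1 − x²))/x²` for `x ≠ 0`. -/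
noncomputable def auxF (x : ℝ) : ℝ :=
  if x = 0 then 1 / 2 else (1 - Real.sqrt (1 - x ^ 2)) / x ^ 2

lemma mul_lt_one_of_sq_add_sq_eq_two {a b : ℝ} (hne : a ≠ b) (h : a ^ 2 + b ^ 2 = 2) :
    a * b < 1 := by
  nlinarith [sq_pos_of_ne_zero (sub_ne_zero.2 hne)]

lemma auxF_mul_of_sq_add_sq_eq_two {a b : ℝ} (ha : 0 ≤ a) (hab : a < b)
    (h : a ^ 2 + b ^ 2 = 2) : auxF (a * b) = (b ^ 2)⁻¹ := by
  rcases ha.eq_or_lt with rfl | ha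
  · norm_num [auxF, show b ^ 2 = 2 by linarith]
  have hb : 0 < b := ha.trans hab
  have hb2 : 1 < b ^ 2 := by nlinarith
  have hsqrt : Real.sqrt (1 - (a * b) ^ 2) = b ^ 2 - 1 := by
    rw [show 1 - (a * b) ^ 2 = (b ^ 2 - 1) ^ 2 by nlinarith, Real.sqrt_sq (by linarith)]
  rw [auxF, if_neg (mul_pos ha hb).ne', hsqrt]
  field_simp
  linarith

lemma sqrt_auxF_mul_of_sq_add_sq_eq_two {a b : ℝ} (ha : 0 ≤ a) (hab : a < b)
    (h : a ^ 2 + b ^ 2 = 2) : Real.sqrt (auxF (a * b)) = b⁻¹ := by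
  rw [auxF_mul_of_sq_add_sq_eq_two ha hab h, Real.sqrt_inv, Real.sqrt_sq (ha.trans_lt hab).le]

theorem psiP_lift_surjective_general (n : ℕ)
    (u v : EuclideanSpace ℝ (Fin (n + 1)))
    (huv : ‖u‖ ^ 2 + ‖v‖ ^ 2 = 2) (horth : ⟪u, v⟫ = 0) (hlt : ‖u‖ < ‖v‖)
    (p q : EuclideanSpace ℝ (Fin (n + 1)))
    (hpdef : p = ‖v‖ • u) (hqdef : q = (‖v‖)⁻¹ • v) :
    ‖u‖ * ‖v‖ < 1 ∧
    Real.sqrt (auxF (‖u‖ * ‖v‖)) * ‖v‖ = 1 ∧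
    ‖p‖ < 1 ∧ ‖q‖ = 1 ∧ ⟪p, q⟫ = 0 ∧
    ∀ j, ((Real.sqrt (auxF ‖p‖) * p j : ℝ) : ℂ) +
        Complex.I * ((q j / Real.sqrt (auxF ‖p‖) : ℝ) : ℂ) =
      ((u j : ℝ) : ℂ) + Complex.I * ((v j : ℝ) : ℂ) := by
  subst hpdef hqdef
  have hv : 0 < ‖v‖ := (norm_nonneg u).trans_lt hlt
  have hlt_one : ‖u‖ * ‖v‖ < 1 := mul_lt_one_of_sq_add_sq_eq_two hlt.ne huv
  have hsqrt : Real.sqrt (auxF (‖u‖ * ‖v‖)) = ‖v‖⁻¹ :=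
    sqrt_auxF_mul_of_sq_add_sq_eq_two (norm_nonneg u) hlt huv
  have hp : ‖‖v‖ • u‖ = ‖u‖ * ‖v‖ := by rw [norm_smul, norm_norm, mul_comm]
  refine ⟨hlt_one, ?_, hp ▸ hlt_one, norm_smul_inv_norm (norm_pos_iff.1 hv), ?_, fun j => ?_⟩
  · rw [hsqrt, inv_mul_cancel₀ hv.ne']
  · rw [real_inner_smul_left, real_inner_smul_right, horth, mul_zero, mul_zero]
  · simp only [hp, hsqrt, PiLp.smul_apply, smul_eq_mul]
    field_simp

/-- The surjectivity argument of Lemma 3.1: if `u, v ∈ ℝ^{n+1}` satisfy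
`‖u‖² + ‖v‖² = 2`, `⟨u, v⟩ = 0` and `‖u‖ < ‖v‖`, then `‖u‖·‖v‖ < 1`,
`√(f(‖u‖·‖v‖))·‖v‖ = 1`, and `(p, q) = (‖v‖·u, v/‖v‖)` lies in the open unit disk
cotangent bundle of `Sⁿ` with `√(f(‖p‖))·p_j + i·q_j/√(f(‖p‖)) = u_j + i·v_j`. -/
theorem psiP_lift_surjective (n : ℕ) (hn : 1 ≤ n)
    (u v : EuclideanSpace ℝ (Fin (n + 1)))
    (huv : ‖u‖ ^ 2 + ‖v‖ ^ 2 = 2) (horth : ⟪u, v⟫ = 0) (hlt : ‖u‖ < ‖v‖)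
    (p q : EuclideanSpace ℝ (Fin (n + 1)))
    (hpdef : p = ‖v‖ • u) (hqdef : q = (‖v‖)⁻¹ • v) :
    ‖u‖ * ‖v‖ < 1 ∧
    Real.sqrt (auxF (‖u‖ * ‖v‖)) * ‖v‖ = 1 ∧
    ‖p‖ < 1 ∧ ‖q‖ = 1 ∧ ⟪p, q⟫ = 0 ∧
    ∀ j, ((Real.sqrt (auxF ‖p‖) * p j : ℝ) : ℂ) +
        Complex.I * ((q j / Real.sqrt (auxF ‖p‖) : ℝ) : ℂ) =
      ((u j : ℝ) : ℂ) + Complex.I * ((v j : ℝ) : ℂ) :=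
  psiP_lift_surjective_general n u v huv horth hlt p q hpdef hqdef
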